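/- arXiv:1609.00582 — 5 statements merged into one kernel-verified Lean document; each statement's English description precedes it below -/
import Mathlib

section
/- Let a < 0, b ≠ 0, H > 1/2, x ≠ 0, and X_t = x·exp{at - (1/2)b²t^{2H} + bB^H_t}. Then for every p > 1, E[|X_t|^p] → +∞ as t → +∞; in particular, adding the bilinear fractional noise destabilizes the p-th moment even though the unperturbed equation (b = 0) satisfies |x e^{at}|^p → 0. -/
open MeasureTheory ProbabilityTheory Real Filter
open scoped NNReal

/-!
Since `B t` is centred Gaussian with variance `t^(2H)`, its moment generating function gives
`E|X t|^p = |x|^p exp (p a t + (p² - p) b² t^(2H) / 2)`. For `p > 1` the coefficient of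
`t^(2H)` is positive, and `2H > 1` lets this term beat the linear term `p a t`.
-/

lemma abs_mul_exp_rpow (x y p : ℝ) : |x * exp y| ^ p = |x| ^ p * exp (p * y) := by
  rw [abs_mul, abs_of_pos (exp_pos y), mul_rpow (abs_nonneg x) (exp_pos y).le, ← exp_mul,
    mul_comm y p]

lemma integral_abs_mul_exp_rpow_of_map_eq_gaussianReal {Ω : Type*} [MeasurableSpace Ω]
    {P : Measure Ω} {Y : Ω → ℝ} {v : ℝ≥0} (hY : P.map Y = gaussianReal 0 v) (x m b p : ℝ) :
    ∫ ω, |x * exp (m + b * Y ω)| ^ p ∂P = |x| ^ p * exp (p * m + v * (p * b) ^ 2 / 2) := by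
  have hmgf := mgf_gaussianReal hY (p * b)
  rw [mgf, zero_mul, zero_add] at hmgf
  simp_rw [abs_mul_exp_rpow, mul_add, exp_add, ← mul_assoc, integral_const_mul, hmgf]

lemma tendsto_mul_add_mul_rpow_atTop (α : ℝ) {c s : ℝ} (hc : 0 < c) (hs : 1 < s) :
    Tendsto (fun t : ℝ => α * t + c * t ^ s) atTop atTop := by
  have hfactor : Tendsto (fun t : ℝ => t * (α + c * t ^ (s - 1))) atTop atTop :=
    tendsto_id.atTop_mul_atTop₀ <| tendsto_atTop_add_const_left _ _ <|
      (tendsto_rpow_atTop (by linarith)).const_mul_atTop hc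
  refine hfactor.congr' ?_
  filter_upwards [eventually_gt_atTop 0] with t ht
  rw [mul_add, ← mul_assoc, mul_comm t c, mul_assoc, ← rpow_one_add' ht.le (by linarith)]
  ring_nf

theorem geometric_fbm_moment_destabilization_general
    {Ω : Type*} [MeasurableSpace Ω] (P : Measure Ω)
    (H : ℝ) (hH : H ∈ Set.Ioo (1 / 2 : ℝ) 1)
    (a b x : ℝ) (ha : a < 0) (hb : b ≠ 0) (hx : x ≠ 0)
    (B : ℝ → Ω → ℝ)
    (hGauss : ∀ t : ℝ, 0 ≤ t →
      Measure.map (B t) P = gaussianReal 0 (Real.toNNReal (t ^ (2 * H))))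
    (X : ℝ → Ω → ℝ)
    (hX : ∀ t ω, X t ω
      = x * Real.exp (a * t - (1 / 2) * b ^ 2 * t ^ (2 * H) + b * B t ω)) :
    ∀ p : ℝ, 1 < p →
      Tendsto (fun t : ℝ => ∫ ω, |X t ω| ^ p ∂P) atTop atTop
        ∧ Tendsto (fun t : ℝ => |x * Real.exp (a * t)| ^ p) atTop (nhds 0) := by
  intro p hp
  have hc : 0 < (p ^ 2 - p) * b ^ 2 / 2 := by
    have : 0 < p ^ 2 - p := by nlinarith
    positivity
  have hmoment : ∀ t ≥ 0, ∫ ω, |X t ω| ^ p ∂P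
      = |x| ^ p * exp (p * a * t + (p ^ 2 - p) * b ^ 2 / 2 * t ^ (2 * H)) := by
    intro t ht
    simp_rw [hX, integral_abs_mul_exp_rpow_of_map_eq_gaussianReal (hGauss t ht),
      coe_toNNReal _ (rpow_nonneg ht _)]
    ring_nf
  have h2H : 1 < 2 * H := by linarith [hH.1]
  have hxp : 0 < |x| ^ p := rpow_pos_of_pos (abs_pos.2 hx) p
  constructor
  · refine Tendsto.congr' ?_ <| (tendsto_exp_atTop.comp <| tendsto_mul_add_mul_rpow_atTop
      (p * a) hc h2H).const_mul_atTop hxp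
    filter_upwards [eventually_ge_atTop 0] with t ht using (hmoment t ht).symm
  · simp_rw [abs_mul_exp_rpow, ← mul_assoc]
    simpa using (tendsto_exp_atBot.comp <| (tendsto_const_mul_atBot_of_neg
      (mul_neg_of_pos_of_neg (by linarith) ha)).2 tendsto_id).const_mul (|x| ^ p)

/-- For `a < 0`, `b ≠ 0`, `H > 1/2`, the `p`-th moment of the geometric fBm
`X t = x * exp (a t - b² t^(2H)/2 + b B t)` blows up as `t → ∞` for every `p > 1`,
while the unperturbed solution `x e^{a t}` satisfies `|x e^{a t}|^p → 0`. -/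
theorem geometric_fbm_moment_destabilization
    {Ω : Type*} [MeasurableSpace Ω] (P : Measure Ω) [IsProbabilityMeasure P]
    (H : ℝ) (hH : H ∈ Set.Ioo (1 / 2 : ℝ) 1)
    (a b x : ℝ) (ha : a < 0) (hb : b ≠ 0) (hx : x ≠ 0)
    (B : ℝ → Ω → ℝ)
    (hB0 : ∀ ω, B 0 ω = 0)
    (hGauss : ∀ t : ℝ, 0 ≤ t →
      Measure.map (B t) P = gaussianReal 0 (Real.toNNReal (t ^ (2 * H))))
    (X : ℝ → Ω → ℝ)
    (hX : ∀ t ω, X t ω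
      = x * Real.exp (a * t - (1 / 2) * b ^ 2 * t ^ (2 * H) + b * B t ω)) :
    ∀ p : ℝ, 1 < p →
      Tendsto (fun t : ℝ => ∫ ω, |X t ω| ^ p ∂P) atTop atTop
        ∧ Tendsto (fun t : ℝ => |x * Real.exp (a * t)| ^ p) atTop (nhds 0) :=
  geometric_fbm_moment_destabilization_general P H hH a b x ha hb hx B hGauss X hX
end

section
/- Let a > 0, b ≠ 0, H > 1/2 and X_t = exp{at - (1/2)b²t^{2H} + bB^H_t}. Then X_t → 0 almost surely as t → +∞. -/
/-!
Almost surely the path of `B` grows at most like `t ^ (H + 1/2)`: Gaussian tail bounds for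
`B n` and for the dyadic increments of `B` on `[n, n + 1]` are summable in `n`, so by
Borel–Cantelli only finitely many of them are large, and dyadic chaining together with path
continuity controls `B` on the whole interval. Since `H + 1/2 < 2H` and `1 < 2H`, the term
`-(1/2) b² t^(2H)` then dominates the exponent, which tends to `-∞`.
-/

open MeasureTheory ProbabilityTheory Real Filter Set
open scoped NNReal ENNReal Topology

section Gaussian

variable {Ω : Type*} [MeasurableSpace Ω] {P : Measure Ω} {Y : Ω → ℝ} {v : ℝ≥0}

lemma aemeasurable_of_map_eq_gaussianReal (h : P.map Y = gaussianReal 0 v) : AEMeasurable Y P :=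
  aemeasurable_of_map_neZero (by rw [h]; infer_instance)

lemma hasSubgaussianMGF_of_map_eq_gaussianReal (h : P.map Y = gaussianReal 0 v) :
    HasSubgaussianMGF Y v P := by
  rw [← HasSubgaussianMGF.id_map_iff (aemeasurable_of_map_eq_gaussianReal h), h]
  exact ⟨integrable_exp_mul_gaussianReal, fun t => by simp [mgf_id_gaussianReal]⟩

lemma ProbabilityTheory.HasSubgaussianMGF.mono {c c' : ℝ≥0} (h : HasSubgaussianMGF Y c P)
    (hc : c ≤ c') : HasSubgaussianMGF Y c' P :=
  ⟨h.integrable_exp_mul, fun t => (h.mgf_le t).trans <| exp_le_exp.2 <| by gcongr⟩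

lemma integral_sq_of_map_eq_gaussianReal (h : P.map Y = gaussianReal 0 v) :
    ∫ ω, Y ω ^ 2 ∂P = v := by
  have hY := aemeasurable_of_map_eq_gaussianReal h
  have hmean : ∫ ω, Y ω ∂P = 0 := by
    simpa [h] using (integral_map hY (aestronglyMeasurable_id (μ := P.map Y))).symm
  rw [← variance_of_integral_eq_zero hY hmean, ← Function.id_comp Y,
    ← variance_map aemeasurable_id hY, h, variance_id_gaussianReal]

lemma ProbabilityTheory.HasSubgaussianMGF.measure_abs_ge_le [IsFiniteMeasure P] {c : ℝ≥0}
    (h : HasSubgaussianMGF Y c P) {ε : ℝ} (hε : 0 ≤ ε) :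
    P {ω | ε ≤ |Y ω|} ≤ 2 * ENNReal.ofReal (exp (-ε ^ 2 / (2 * c))) := by
  have hsplit : {ω | ε ≤ |Y ω|} = {ω | ε ≤ Y ω} ∪ {ω | ε ≤ (-Y) ω} := by
    ext ω; simp [le_abs', or_comm, le_neg]
  rw [hsplit, two_mul]
  refine (measure_union_le _ _).trans (add_le_add ?_ ?_) <;>
    rw [← ofReal_measureReal] <;> gcongr
  exacts [h.measure_ge_le hε, h.neg.measure_ge_le hε]

lemma measure_abs_ge_le_of_map_eq_gaussianReal [IsFiniteMeasure P]
    (h : P.map Y = gaussianReal 0 v) {σ2 ε x : ℝ} (hσ : ∫ ω, Y ω ^ 2 ∂P ≤ σ2) (hε : 0 ≤ ε)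
    (hx : x ≤ ε ^ 2 / (2 * σ2)) :
    P {ω | ε ≤ |Y ω|} ≤ 2 * ENNReal.ofReal (exp (-x)) := by
  rw [integral_sq_of_map_eq_gaussianReal h] at hσ
  have hσ0 : 0 ≤ σ2 := v.2.trans hσ
  refine ((hasSubgaussianMGF_of_map_eq_gaussianReal h).mono (c' := σ2.toNNReal)
    (Real.le_toNNReal_iff_coe_le hσ0 |>.2 hσ)).measure_abs_ge_le hε |>.trans ?_
  rw [Real.coe_toNNReal _ hσ0]
  gcongr
  linarith [neg_div (2 * σ2) (ε ^ 2)]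

end Gaussian

lemma ofReal_exp_neg_natCast (m : ℕ) :
    ENNReal.ofReal (exp (-m)) = ENNReal.ofReal (exp (-1)) ^ m := by
  rw [← ENNReal.ofReal_pow (exp_pos _).le, ← exp_nat_mul]
  ring_nf

lemma two_mul_ofReal_exp_neg_one_lt_one : 2 * ENNReal.ofReal (exp (-1)) < 1 := by
  rw [← ENNReal.ofReal_ofNat, ← ENNReal.ofReal_mul (by norm_num), ENNReal.ofReal_lt_one,
    exp_neg, ← div_eq_mul_inv, div_lt_one (exp_pos 1)]
  linarith [exp_one_gt_d9]

section Chaining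

variable {g : ℝ → ℝ} {r S : ℝ} {ε : ℕ → ℝ}

lemma abs_sub_dyadic_le_of_increments
    (hS : ∀ K, ∑ k ∈ Finset.range K, ε k ≤ S)
    (hinc : ∀ k j : ℕ, j < 2 ^ (k + 1) →
      |g (r + (j + 1) / 2 ^ (k + 1)) - g (r + j / 2 ^ (k + 1))| ≤ ε k)
    (K j : ℕ) (hj : j < 2 ^ K) : |g (r + j / 2 ^ K) - g r| ≤ S := by
  have hε : ∀ k, 0 ≤ ε k := fun k => (abs_nonneg _).trans (hinc k 0 (by positivity))
  refine le_trans ?_ (hS K)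
  induction K generalizing j with
  | zero => simp_all
  | succ K ih =>
    obtain ⟨i, hji⟩ := Nat.even_or_odd' j
    have hi : i < 2 ^ K := by omega
    have hpt : r + ((2 * i : ℕ) : ℝ) / 2 ^ (K + 1) = r + i / 2 ^ K := by
      push_cast; field_simp; ring
    rw [Finset.sum_range_succ]
    rcases hji with rfl | rfl
    · rw [hpt]
      linarith [ih i hi, hε K]
    · have hstep := hinc K (2 * i) (by omega)
      rw [hpt] at hstep
      push_cast at hstep ⊢
      calc |g (r + (2 * i + 1) / 2 ^ (K + 1)) - g r|
          ≤ |g (r + (2 * i + 1) / 2 ^ (K + 1)) - g (r + i / 2 ^ K)|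
            + |g (r + i / 2 ^ K) - g r| := abs_sub_le _ _ _
        _ ≤ _ := by linarith [ih i hi]

lemma abs_sub_le_of_dyadic_increments (hg : Continuous g)
    (hS : ∀ K, ∑ k ∈ Finset.range K, ε k ≤ S)
    (hinc : ∀ k j : ℕ, j < 2 ^ (k + 1) →
      |g (r + (j + 1) / 2 ^ (k + 1)) - g (r + j / 2 ^ (k + 1))| ≤ ε k)
    {t : ℝ} (ht : t ∈ Icc r (r + 1)) : |g t - g r| ≤ S := by
  have hclosed : IsClosed {t | |g t - g r| ≤ S} :=
    isClosed_le (by fun_prop) continuous_const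
  rw [← closure_Ico (by simp : r ≠ r + 1)] at ht
  refine hclosed.closure_subset_iff.2 (fun t ht => ?_) ht
  set u : ℕ → ℝ := fun K => r + (⌊(t - r) * 2 ^ K⌋₊ : ℝ) / 2 ^ K
  have hu : Tendsto u atTop (𝓝 t) := by
    have := ((tendsto_nat_floor_mul_div_atTop (sub_nonneg.2 ht.1)).comp
      (tendsto_pow_atTop_atTop_of_one_lt one_lt_two)).const_add r
    simpa using this
  refine le_of_tendsto' ((hg.tendsto t).comp hu |>.sub_const (g r) |>.abs) (fun K => ?_)
  refine abs_sub_dyadic_le_of_increments hS hinc K _ ?_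
  rw [Nat.floor_lt (by have := ht.1; positivity)]
  push_cast
  nlinarith [ht.2, pow_pos (two_pos : (0 : ℝ) < 2) K]

end Chaining

def IsCenteredGaussianProcess {Ω : Type*} [MeasurableSpace Ω] (P : Measure Ω)
    (B : ℝ → Ω → ℝ) : Prop :=
  ∀ (n : ℕ) (c : Fin n → ℝ) (ts : Fin n → ℝ), (∀ i, 0 ≤ ts i) →
    ∃ v : NNReal, Measure.map (fun ω => ∑ i, c i * B (ts i) ω) P = gaussianReal 0 v

def HasFBMCovariance {Ω : Type*} [MeasurableSpace Ω] (P : Measure Ω) (H : ℝ)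
    (B : ℝ → Ω → ℝ) : Prop :=
  ∀ s t : ℝ, 0 ≤ s → 0 ≤ t →
    ∫ ω, B t ω * B s ω ∂P = (1 / 2) * (s ^ (2 * H) + t ^ (2 * H) - |t - s| ^ (2 * H))

-- The thresholds make each Gaussian tail below `2 e^(-(n + k))`, while the chaining sums
-- `∑ₖ 4 (n + 1) (3/4)^(k+1)` stay below `12 (n + 1)`.
def dyadicExceedance {Ω : Type*} (B : ℝ → Ω → ℝ) (H : ℝ) (n : ℕ) : Set Ω :=
  {ω | 2 * ((n : ℝ) + 1) ^ (H + 1 / 2) ≤ |B n ω|} ∪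
    ⋃ (k : ℕ) (j : Fin (2 ^ (k + 1))), {ω | 4 * ((n : ℝ) + 1) * (3 / 4) ^ (k + 1)
      ≤ |B (n + ((j : ℕ) + 1) / 2 ^ (k + 1)) ω - B (n + (j : ℕ) / 2 ^ (k + 1)) ω|}

section Exceedance

variable {Ω : Type*} {H : ℝ} {B : ℝ → Ω → ℝ}

lemma abs_le_of_notMem_dyadicExceedance (hH : 1 / 2 ≤ H) {ω : Ω}
    (hω : Continuous fun t => B t ω) {n : ℕ} (hn : ω ∉ dyadicExceedance B H n) {t : ℝ}
    (ht : t ∈ Icc (n : ℝ) (n + 1)) : |B t ω| ≤ 14 * ((n : ℝ) + 1) ^ (H + 1 / 2) := by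
  simp only [dyadicExceedance, mem_union, mem_iUnion, mem_ofPred_eq, not_or, not_exists,
    not_le] at hn
  obtain ⟨hval, hinc⟩ := hn
  have hgeom : ∀ K, ∑ k ∈ Finset.range K, 4 * ((n : ℝ) + 1) * (3 / 4) ^ (k + 1)
      ≤ 12 * ((n : ℝ) + 1) := by
    intro K
    have hsum : ∑ k ∈ Finset.range K, (3 / 4 : ℝ) ^ (k + 1) = 3 * (1 - (3 / 4) ^ K) := by
      induction K with
      | zero => simp
      | succ K ih => rw [Finset.sum_range_succ, ih]; ring
    rw [← Finset.mul_sum, hsum]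
    nlinarith [pow_nonneg (by norm_num : (0 : ℝ) ≤ 3 / 4) K]
  have hchain := abs_sub_le_of_dyadic_increments hω hgeom
    (fun k j hj => (hinc k ⟨j, hj⟩).le) ht
  have hlin : (n : ℝ) + 1 ≤ ((n : ℝ) + 1) ^ (H + 1 / 2) :=
    self_le_rpow_of_one_le (by simp) (by linarith)
  calc |B t ω| ≤ |B n ω| + |B t ω - B n ω| := by
        simpa using abs_add_le (B n ω) (B t ω - B n ω)
    _ ≤ 14 * ((n : ℝ) + 1) ^ (H + 1 / 2) := by linarith

end Exceedance

section FBM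

variable {Ω : Type*} [MeasurableSpace Ω] {P : Measure Ω} {H : ℝ} {B : ℝ → Ω → ℝ}

lemma IsCenteredGaussianProcess.map_eval (hB : IsCenteredGaussianProcess P B) {t : ℝ}
    (ht : 0 ≤ t) : ∃ v : ℝ≥0, P.map (B t) = gaussianReal 0 v := by
  simpa using hB 1 ![1] ![t] (by simpa using ht)

lemma IsCenteredGaussianProcess.map_sub (hB : IsCenteredGaussianProcess P B) {p q : ℝ}
    (hp : 0 ≤ p) (hq : 0 ≤ q) :
    ∃ v : ℝ≥0, P.map (fun ω => B p ω - B q ω) = gaussianReal 0 v := by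
  simpa [Fin.sum_univ_two, ← sub_eq_add_neg] using
    hB 2 ![1, -1] ![p, q] (by simp [Fin.forall_fin_two, hp, hq])

lemma IsCenteredGaussianProcess.memLp_two (hB : IsCenteredGaussianProcess P B) {t : ℝ}
    (ht : 0 ≤ t) : MemLp (B t) 2 P := by
  obtain ⟨v, hv⟩ := hB.map_eval ht
  exact (hasSubgaussianMGF_of_map_eq_gaussianReal hv).memLp 2

lemma HasFBMCovariance.integral_sq (hC : HasFBMCovariance P H B) (hH : 0 < H) {t : ℝ}
    (ht : 0 ≤ t) : ∫ ω, B t ω ^ 2 ∂P = t ^ (2 * H) := by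
  simp_rw [sq, hC t t ht ht, sub_self, abs_zero, zero_rpow (by positivity : 2 * H ≠ 0)]
  ring

lemma integral_sq_sub_eq_rpow (hB : IsCenteredGaussianProcess P B)
    (hC : HasFBMCovariance P H B) (hH : 0 < H) {p q : ℝ} (hp : 0 ≤ p) (hq : 0 ≤ q) :
    ∫ ω, (B p ω - B q ω) ^ 2 ∂P = |p - q| ^ (2 * H) := by
  have hBp := hB.memLp_two hp
  have hBq := hB.memLp_two hq
  have hpq : Integrable (fun ω => 2 * (B p ω * B q ω)) P :=
    (hBp.integrable_mul hBq).const_mul 2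
  have hexpand : (fun ω => (B p ω - B q ω) ^ 2)
      = fun ω => (B p ω ^ 2 - 2 * (B p ω * B q ω)) + B q ω ^ 2 := by
    ext ω; ring
  rw [hexpand, integral_add (f := fun ω => B p ω ^ 2 - 2 * (B p ω * B q ω))
    (hBp.integrable_sq.sub hpq) hBq.integrable_sq,
    integral_sub hBp.integrable_sq hpq, integral_const_mul, hC.integral_sq hH hp,
    hC.integral_sq hH hq, hC q p hq hp]
  ring

lemma measure_abs_eval_natCast_ge_le [IsFiniteMeasure P]
    (hB : IsCenteredGaussianProcess P B) (hC : HasFBMCovariance P H B) (hH : 1 / 2 ≤ H) (n : ℕ) :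
    P {ω | 2 * ((n : ℝ) + 1) ^ (H + 1 / 2) ≤ |B n ω|} ≤ 2 * ENNReal.ofReal (exp (-1)) ^ n := by
  obtain ⟨v, hv⟩ := hB.map_eval n.cast_nonneg
  have hn : (0 : ℝ) < n + 1 := by positivity
  rw [← ofReal_exp_neg_natCast]
  refine measure_abs_ge_le_of_map_eq_gaussianReal hv (σ2 := ((n : ℝ) + 1) ^ (2 * H)) ?_
    (by positivity) ?_
  · rw [hC.integral_sq (by linarith) n.cast_nonneg]
    gcongr
    linarith
  · have hsq : (((n : ℝ) + 1) ^ (H + 1 / 2)) ^ 2 = ((n : ℝ) + 1) ^ (2 * H) * (n + 1) := by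
      rw [← rpow_natCast, ← rpow_mul hn.le, ← rpow_add_one hn.ne']
      congr 1
      push_cast
      ring
    rw [mul_pow, hsq]
    field_simp
    nlinarith [rpow_pos_of_pos hn (2 * H)]

lemma measure_abs_dyadic_increment_ge_le [IsFiniteMeasure P]
    (hB : IsCenteredGaussianProcess P B) (hC : HasFBMCovariance P H B) (hH : 1 / 2 ≤ H)
    (n k j : ℕ) :
    P {ω | 4 * ((n : ℝ) + 1) * (3 / 4) ^ (k + 1)
      ≤ |B (n + (j + 1) / 2 ^ (k + 1)) ω - B (n + j / 2 ^ (k + 1)) ω|}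
      ≤ 2 * ENNReal.ofReal (exp (-1)) ^ (n + k) := by
  obtain ⟨v, hv⟩ := hB.map_sub (p := n + (j + 1) / 2 ^ (k + 1)) (q := n + j / 2 ^ (k + 1))
    (by positivity) (by positivity)
  have hδ : (n + (j + 1) / 2 ^ (k + 1) : ℝ) - (n + j / 2 ^ (k + 1)) = (1 / 2) ^ (k + 1) := by
    rw [one_div_pow]; ring
  rw [← ofReal_exp_neg_natCast]
  refine measure_abs_ge_le_of_map_eq_gaussianReal hv (σ2 := (1 / 2) ^ (k + 1)) ?_
    (by positivity) ?_
  · rw [integral_sq_sub_eq_rpow hB hC (by linarith) (by positivity) (by positivity), hδ,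
      abs_of_pos (by positivity)]
    calc ((1 / 2 : ℝ) ^ (k + 1)) ^ (2 * H) ≤ ((1 / 2 : ℝ) ^ (k + 1)) ^ (1 : ℝ) :=
          rpow_le_rpow_of_exponent_ge (by positivity) (pow_le_one₀ (by norm_num) (by norm_num))
            (by linarith)
      _ = (1 / 2) ^ (k + 1) := rpow_one _
  · have hbern : 1 + (k + 1 : ℝ) * (1 / 8) ≤ (9 / 8) ^ (k + 1) := by
      have := one_add_mul_le_pow (a := (1 / 8 : ℝ)) (by norm_num) (k + 1)
      norm_num at this ⊢
      exact this
    have hpow : ((3 / 4 : ℝ) ^ (k + 1)) ^ 2 = (9 / 8) ^ (k + 1) * (1 / 2) ^ (k + 1) := by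
      rw [← mul_pow, ← pow_mul, mul_comm (k + 1), pow_mul]
      norm_num
    have hquot : (4 * ((n : ℝ) + 1) * (3 / 4) ^ (k + 1)) ^ 2 / (2 * (1 / 2) ^ (k + 1))
        = 8 * ((n : ℝ) + 1) ^ 2 * (9 / 8) ^ (k + 1) := by
      rw [mul_pow, hpow]
      field_simp
      ring
    have hlin : (n : ℝ) + k ≤ 8 * ((n : ℝ) + 1) ^ 2 * (1 + (k + 1) * (1 / 8)) := by
      nlinarith [n.cast_nonneg (α := ℝ), k.cast_nonneg (α := ℝ),
        mul_nonneg (n.cast_nonneg (α := ℝ)) (k.cast_nonneg (α := ℝ))]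
    rw [hquot]
    push_cast
    nlinarith [mul_le_mul_of_nonneg_left hbern (by positivity : (0 : ℝ) ≤ 8 * ((n : ℝ) + 1) ^ 2)]

lemma measure_dyadicExceedance_le [IsFiniteMeasure P] (hB : IsCenteredGaussianProcess P B)
    (hC : HasFBMCovariance P H B) (hH : 1 / 2 ≤ H) (n : ℕ) :
    P (dyadicExceedance B H n) ≤
      (2 + 4 * ∑' k, (2 * ENNReal.ofReal (exp (-1))) ^ k) * ENNReal.ofReal (exp (-1)) ^ n := by
  set ρ := ENNReal.ofReal (exp (-1))
  calc P (dyadicExceedance B H n)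
      ≤ 2 * ρ ^ n + ∑' k : ℕ, ∑ _j : Fin (2 ^ (k + 1)), 2 * ρ ^ (n + k) := by
        refine (measure_union_le _ _).trans (add_le_add
          (measure_abs_eval_natCast_ge_le hB hC hH n) ?_)
        refine (measure_iUnion_le _).trans (ENNReal.tsum_le_tsum fun k => ?_)
        exact (measure_iUnion_fintype_le _ _).trans
          (Finset.sum_le_sum fun j _ => measure_abs_dyadic_increment_ge_le hB hC hH n k j)
    _ = (2 + 4 * ∑' k, (2 * ρ) ^ k) * ρ ^ n := by
        have hlevel : ∀ k : ℕ,
            ∑ _j : Fin (2 ^ (k + 1)), 2 * ρ ^ (n + k) = 4 * (2 * ρ) ^ k * ρ ^ n := by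
          intro k
          simp only [Finset.sum_const, Finset.card_univ, Fintype.card_fin, nsmul_eq_mul]
          push_cast
          ring
        simp_rw [hlevel]
        rw [ENNReal.tsum_mul_right, ENNReal.tsum_mul_left]
        ring

lemma ae_eventually_forall_Icc_abs_le [IsFiniteMeasure P] (hB : IsCenteredGaussianProcess P B)
    (hC : HasFBMCovariance P H B) (hH : 1 / 2 ≤ H)
    (hcont : ∀ᵐ ω ∂P, Continuous fun t => B t ω) :
    ∀ᵐ ω ∂P, ∀ᶠ n : ℕ in atTop, ∀ t ∈ Icc (n : ℝ) (n + 1),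
      |B t ω| ≤ 14 * ((n : ℝ) + 1) ^ (H + 1 / 2) := by
  have hsum : ∑' n, P (dyadicExceedance B H n) ≠ ⊤ := by
    refine ne_top_of_le_ne_top ?_ (ENNReal.tsum_le_tsum (measure_dyadicExceedance_le hB hC hH))
    rw [ENNReal.tsum_mul_left]
    have hρ : ENNReal.ofReal (exp (-1)) < 1 :=
      lt_of_le_of_lt (le_mul_of_one_le_left' one_le_two) two_mul_ofReal_exp_neg_one_lt_one
    exact ENNReal.mul_ne_top (ENNReal.add_ne_top.2 ⟨by simp, ENNReal.mul_ne_top (by simp)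
      (tsum_geometric_lt_top.2 two_mul_ofReal_exp_neg_one_lt_one).ne⟩)
      (tsum_geometric_lt_top.2 hρ).ne
  filter_upwards [hcont, ae_eventually_notMem hsum] with ω hω hn
  exact hn.mono fun n hn t ht => abs_le_of_notMem_dyadicExceedance hH hω hn ht

end FBM

lemma eventually_abs_le_rpow_of_nat {f : ℝ → ℝ} {K γ : ℝ} (hK : 0 ≤ K) (hγ : 0 ≤ γ)
    (h : ∀ᶠ n : ℕ in atTop, ∀ t ∈ Icc (n : ℝ) (n + 1), |f t| ≤ K * ((n : ℝ) + 1) ^ γ) :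
    ∀ᶠ t in atTop, |f t| ≤ K * (t + 1) ^ γ := by
  obtain ⟨N, hN⟩ := eventually_atTop.1 h
  filter_upwards [eventually_ge_atTop (N : ℝ)] with t ht
  have ht0 : 0 ≤ t := N.cast_nonneg.trans ht
  refine (hN ⌊t⌋₊ (Nat.le_floor ht) t ⟨Nat.floor_le ht0, (Nat.lt_floor_add_one t).le⟩).trans ?_
  gcongr
  exact Nat.floor_le ht0

lemma tendsto_mul_add_rpow_sub_rpow_atBot {a K c γ β : ℝ} (hK : 0 ≤ K) (hc : 0 < c)
    (hγ : 0 ≤ γ) (hγβ : γ < β) (hβ : 1 < β) :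
    Tendsto (fun t => a * t + K * (t + 1) ^ γ - c * t ^ β) atTop atBot := by
  have hfactor : Tendsto (fun t : ℝ => a * t ^ (-(β - 1)) + K * 2 ^ γ * t ^ (-(β - γ)) - c)
      atTop (𝓝 (a * 0 + K * 2 ^ γ * 0 - c)) :=
    (((tendsto_rpow_neg_atTop (by linarith)).const_mul a).add
      ((tendsto_rpow_neg_atTop (by linarith)).const_mul _)).sub_const c
  rw [mul_zero, mul_zero, add_zero, zero_sub] at hfactor
  refine tendsto_atBot_mono' atTop ?_
    ((tendsto_rpow_atTop (by linarith : 0 < β)).atTop_mul_neg (neg_neg_of_pos hc) hfactor)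
  filter_upwards [eventually_ge_atTop 1] with t ht
  have ht0 : 0 < t := by linarith
  have hpow : (t + 1) ^ γ ≤ 2 ^ γ * t ^ γ := by
    rw [← mul_rpow zero_le_two ht0.le]
    gcongr
    linarith
  have hexp : ∀ e, t ^ β * t ^ (-(β - e)) = t ^ e := fun e => by
    rw [← rpow_add ht0]; ring_nf
  calc a * t + K * (t + 1) ^ γ - c * t ^ β
      ≤ a * t + K * (2 ^ γ * t ^ γ) - c * t ^ β := by gcongr
    _ = t ^ β * (a * t ^ (-(β - 1)) + K * 2 ^ γ * t ^ (-(β - γ)) - c) := by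
        have h1 : t ^ β * t ^ (-(β - 1)) = t := by rw [hexp, rpow_one]
        linear_combination (-a) * h1 - K * 2 ^ γ * hexp γ

theorem geometric_fbm_pathwise_stability_general
    {Ω : Type*} [MeasurableSpace Ω] (P : Measure Ω) [IsProbabilityMeasure P]
    (H : ℝ) (hH : H ∈ Set.Ioo (1 / 2 : ℝ) 1)
    (a b : ℝ) (hb : b ≠ 0)
    (B : ℝ → Ω → ℝ)
    (hGauss : ∀ (n : ℕ) (c : Fin n → ℝ) (ts : Fin n → ℝ), (∀ i, 0 ≤ ts i) →
      ∃ v : NNReal,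
        Measure.map (fun ω => ∑ i, c i * B (ts i) ω) P = gaussianReal 0 v)
    (hCov : ∀ s t : ℝ, 0 ≤ s → 0 ≤ t →
      ∫ ω, B t ω * B s ω ∂P
        = (1 / 2) * (s ^ (2 * H) + t ^ (2 * H) - |t - s| ^ (2 * H)))
    (hcont : ∀ᵐ ω ∂P, Continuous fun t => B t ω)
    (X : ℝ → Ω → ℝ)
    (hX : ∀ t ω, X t ω
      = Real.exp (a * t - (1 / 2) * b ^ 2 * t ^ (2 * H) + b * B t ω)) :
    ∀ᵐ ω ∂P, Tendsto (fun t : ℝ => X t ω) atTop (nhds 0) := by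
  have hH' : 1 / 2 ≤ H := hH.1.le
  have hdrift := tendsto_mul_add_rpow_sub_rpow_atBot (a := a) (K := |b| * 14)
    (c := 1 / 2 * b ^ 2) (γ := H + 1 / 2) (β := 2 * H)
    (by positivity) (by positivity) (by linarith) (by linarith [hH.1]) (by linarith [hH.1])
  filter_upwards [ae_eventually_forall_Icc_abs_le hGauss hCov hH' hcont] with ω hω
  have hpath := eventually_abs_le_rpow_of_nat (by norm_num) (by linarith) hω
  simp_rw [hX]
  refine tendsto_exp_atBot.comp (tendsto_atBot_mono' _ (hpath.mono fun t ht => ?_) hdrift)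
  have hbB : b * B t ω ≤ |b| * (14 * (t + 1) ^ (H + 1 / 2)) :=
    (le_abs_self _).trans (abs_mul b (B t ω) ▸ mul_le_mul_of_nonneg_left ht (abs_nonneg b))
  linarith

/-- For `a > 0`, `b ≠ 0`, `H ∈ (1/2,1)` and a fractional Brownian motion `B` with
Hurst parameter `H`, the pathwise solution `X t = exp (a t - b² t^(2H)/2 + b B t)`
tends to `0` almost surely as `t → ∞`. -/
theorem geometric_fbm_pathwise_stability
    {Ω : Type*} [MeasurableSpace Ω] (P : Measure Ω) [IsProbabilityMeasure P]
    (H : ℝ) (hH : H ∈ Set.Ioo (1 / 2 : ℝ) 1)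
    (a b : ℝ) (ha : 0 < a) (hb : b ≠ 0)
    (B : ℝ → Ω → ℝ)
    (hGauss : ∀ (n : ℕ) (c : Fin n → ℝ) (ts : Fin n → ℝ), (∀ i, 0 ≤ ts i) →
      ∃ v : NNReal,
        Measure.map (fun ω => ∑ i, c i * B (ts i) ω) P = gaussianReal 0 v)
    (hCenter : ∀ t : ℝ, 0 ≤ t → ∫ ω, B t ω ∂P = 0)
    (hCov : ∀ s t : ℝ, 0 ≤ s → 0 ≤ t →
      ∫ ω, B t ω * B s ω ∂P
        = (1 / 2) * (s ^ (2 * H) + t ^ (2 * H) - |t - s| ^ (2 * H)))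
    (hcont : ∀ᵐ ω ∂P, Continuous fun t => B t ω)
    (X : ℝ → Ω → ℝ)
    (hX : ∀ t ω, X t ω
      = Real.exp (a * t - (1 / 2) * b ^ 2 * t ^ (2 * H) + b * B t ω)) :
    ∀ᵐ ω ∂P, Tendsto (fun t : ℝ => X t ω) atTop (nhds 0) :=
  geometric_fbm_pathwise_stability_general P H hH a b hb B hGauss hCov hcont X hX
end

section
/- The function R_H(t,s) = (1/2)(t^{2H} + s^{2H} - |t-s|^{2H}) is positive semidefinite on [0,∞)² for every H ∈ (0,1): for all n, all t₁,...,tₙ ≥ 0 and all a₁,...,aₙ ∈ ℝ, Σᵢⱼ aᵢaⱼ R_H(tᵢ,tⱼ) ≥ 0. -/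
open Real

open MeasureTheory Set

lemma fbmAux_integrable (α : ℝ) (hα1 : 0 < α) (hα2 : α < 2) (x : ℝ) :
    IntegrableOn (fun l => (1 - Real.cos (x * l)) * l ^ (-1 - α)) (Ioi (0:ℝ)) := by
  have hcont : ContinuousOn (fun l => (1 - Real.cos (x * l)) * l ^ (-1 - α)) (Ioi (0:ℝ)) := by
    apply ContinuousOn.mul
    · exact (continuous_const.sub (Real.continuous_cos.comp (continuous_const.mul continuous_id))).continuousOn
    · exact ContinuousOn.rpow_const continuousOn_id (fun l hl => Or.inl (ne_of_gt hl))
  rw [← Ioc_union_Ioi_eq_Ioi (le_of_lt one_pos)]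
  apply IntegrableOn.union
  · -- on Ioc 0 1, dominate by (x^2/2) * l^(1-α)
    have hint : IntegrableOn (fun l : ℝ => x^2/2 * l ^ (1 - α)) (Ioc (0:ℝ) 1) := by
      have := intervalIntegral.intervalIntegrable_rpow' (a := 0) (b := 1) (r := 1 - α) (by linarith)
      rw [intervalIntegrable_iff_integrableOn_Ioc_of_le (by norm_num)] at this
      exact this.const_mul _
    apply Integrable.mono' hint
    · exact (hcont.mono (Ioc_subset_Ioi_self)).aestronglyMeasurable measurableSet_Ioc
    · filter_upwards [ae_restrict_mem measurableSet_Ioc] with l hl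
      have hl0 : (0:ℝ) < l := hl.1
      have h1 : 0 ≤ 1 - Real.cos (x * l) := by nlinarith [Real.cos_le_one (x * l)]
      have h2 : (0:ℝ) < l ^ (-1 - α) := Real.rpow_pos_of_pos hl0 _
      rw [Real.norm_eq_abs, abs_of_nonneg (mul_nonneg h1 h2.le)]
      have hb : 1 - Real.cos (x * l) ≤ (x * l)^2 / 2 := by
        nlinarith [Real.one_sub_sq_div_two_le_cos (x := x * l)]
      calc (1 - Real.cos (x * l)) * l ^ (-1 - α) ≤ (x*l)^2/2 * l ^ (-1 - α) := by
            exact mul_le_mul_of_nonneg_right hb h2.le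
        _ = x^2/2 * l ^ (1 - α) := by
            rw [mul_pow]
            have : (l:ℝ)^2 * l ^ (-1-α) = l ^ (1 - α) := by
              rw [← Real.rpow_natCast l 2, ← Real.rpow_add hl0]
              congr 1
              push_cast
              ring
            ring_nf
            rw [mul_comm] at this
            nlinarith [this]
  · -- on Ioi 1, dominate by 2 * l^(-1-α)
    have hint : IntegrableOn (fun l : ℝ => 2 * l ^ (-1 - α)) (Ioi (1:ℝ)) :=
      (integrableOn_Ioi_rpow_of_lt (by linarith) one_pos).const_mul _
    apply Integrable.mono' hint
    · exact (hcont.mono (fun l (hl : l ∈ Ioi (1:ℝ)) => (lt_trans one_pos hl : (0:ℝ) < l))).aestronglyMeasurable measurableSet_Ioi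
    · filter_upwards [ae_restrict_mem measurableSet_Ioi] with l hl
      have hl0 : (0:ℝ) < l := lt_trans one_pos hl
      have h1 : 0 ≤ 1 - Real.cos (x * l) := by nlinarith [Real.cos_le_one (x * l)]
      have h2 : (0:ℝ) < l ^ (-1 - α) := Real.rpow_pos_of_pos hl0 _
      rw [Real.norm_eq_abs, abs_of_nonneg (mul_nonneg h1 h2.le)]
      have : 1 - Real.cos (x * l) ≤ 2 := by nlinarith [Real.neg_one_le_cos (x * l)]
      nlinarith

noncomputable def fbmJ (α x : ℝ) : ℝ := ∫ l in Ioi (0:ℝ), (1 - Real.cos (x * l)) * l ^ (-1 - α)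

lemma fbmJ_scale (α : ℝ) {x : ℝ} (hx : 0 < x) :
    fbmJ α x = x ^ α * fbmJ α 1 := by
  have h := integral_comp_mul_left_Ioi (fun u => (1 - Real.cos u) * u ^ (-1 - α)) 0 hx
  simp only [mul_zero] at h
  have h2 : ∫ l in Ioi (0:ℝ), (1 - Real.cos (x * l)) * (x * l) ^ (-1 - α)
      = x ^ (-1 - α) * fbmJ α x := by
    rw [fbmJ, ← integral_const_mul]
    apply setIntegral_congr_fun measurableSet_Ioi
    intro l hl
    simp only []
    rw [Real.mul_rpow hx.le (le_of_lt hl)]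
    ring
  rw [h2] at h
  have h3 : (fun u => (1 - Real.cos u) * u ^ (-1 - α) ) = fun u => (1 - Real.cos (1 * u)) * u ^ (-1-α) := by
    funext u; rw [one_mul]
  rw [h3] at h
  have hxne : x ^ (-1 - α) ≠ 0 := ne_of_gt (Real.rpow_pos_of_pos hx _)
  have h4 : fbmJ α 1 = ∫ (u : ℝ) in Ioi 0, (1 - Real.cos (1 * u)) * u ^ (-1 - α) := rfl
  rw [smul_eq_mul, ← h4] at h
  have : fbmJ α x = (x ^ (-1 - α))⁻¹ * (x⁻¹ * fbmJ α 1) := by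
    field_simp at h ⊢
    linarith [h]
  rw [this, ← Real.rpow_neg hx.le, ← Real.rpow_neg_one x, ← mul_assoc, ← Real.rpow_add hx,
    show -(-1-α) + (-1 : ℝ) = α by ring]

lemma fbmJ_zero (α : ℝ) : fbmJ α 0 = 0 := by
  simp [fbmJ]

lemma fbmJ_pos (α : ℝ) (hα1 : 0 < α) (hα2 : α < 2) : 0 < fbmJ α 1 := by
  have hint : IntegrableOn (fun l => (1 - Real.cos (1 * l)) * l ^ (-1 - α)) (Ioi (0:ℝ)) :=
    fbmAux_integrable α hα1 hα2 1
  rw [fbmJ, setIntegral_pos_iff_support_of_nonneg_ae ?_ hint]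
  · apply lt_of_lt_of_le ?_ (measure_mono (?_ : Ioc (π/2) π ⊆ _))
    · rw [Real.volume_Ioc]
      rw [ENNReal.ofReal_pos]
      linarith [Real.pi_pos]
    · intro l hl
      have hl0 : (0:ℝ) < l := lt_trans (by positivity) hl.1
      constructor
      · apply ne_of_gt
        apply mul_pos
        · have hc : Real.cos (1 * l) ≤ 0 := by
            rw [one_mul]
            exact Real.cos_nonpos_of_pi_div_two_le_of_le hl.1.le (by linarith [Real.pi_pos, hl.2])
          linarith
        · exact Real.rpow_pos_of_pos hl0 _
      · exact hl0
  · filter_upwards [ae_restrict_mem measurableSet_Ioi] with l hl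
    exact mul_nonneg (by nlinarith [Real.cos_le_one (1 * l)])
      (Real.rpow_nonneg (le_of_lt hl) _)

lemma fbmJ_eq (α : ℝ) (hα1 : 0 < α) {x : ℝ} (hx : 0 ≤ x) :
    fbmJ α x = x ^ α * fbmJ α 1 := by
  rcases eq_or_lt_of_le hx with h | h
  · rw [← h, fbmJ_zero, Real.zero_rpow (ne_of_gt hα1), zero_mul]
  · exact fbmJ_scale α h

lemma fbmJ_abs (α x : ℝ) : fbmJ α |x| = fbmJ α x := by
  unfold fbmJ
  apply setIntegral_congr_fun measurableSet_Ioi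
  intro l hl
  simp only []
  rw [show |x| * l = |x * l| by rw [abs_mul, abs_of_nonneg (le_of_lt (show (0:ℝ) < l from hl))], Real.cos_abs]

open Finset in
/-- The fBm covariance `R_H(t,s) = (1/2)(t^(2H) + s^(2H) - |t-s|^(2H))` is positive
semidefinite on `[0,∞)²` for every Hurst parameter `H ∈ (0,1)`. -/
theorem fbm_covariance_posSemidef
    (H : ℝ) (hH : H ∈ Set.Ioo (0 : ℝ) 1)
    (n : ℕ) (t : Fin n → ℝ) (ht : ∀ i, 0 ≤ t i) (a : Fin n → ℝ) :
    0 ≤ ∑ i, ∑ j, a i * a j *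
      ((1 / 2) * ((t i) ^ (2 * H) + (t j) ^ (2 * H) - |t i - t j| ^ (2 * H))) := by
  obtain ⟨hH1, hH2⟩ := hH
  set α : ℝ := 2 * H with hαdef
  have hα1 : (0:ℝ) < α := by positivity
  have hα2 : α < 2 := by simp only [hαdef]; linarith
  set c : ℝ := fbmJ α 1 with hcdef
  have hc : 0 < c := fbmJ_pos α hα1 hα2
  -- the pairwise integrand
  set h : Fin n → Fin n → ℝ → ℝ := fun i j l => a i * a j *
      ((1 - Real.cos (t i * l)) + (1 - Real.cos (t j * l)) - (1 - Real.cos ((t i - t j) * l)))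
      * l ^ (-1 - α) with hhdef
  have hInt : ∀ i j, IntegrableOn (h i j) (Ioi (0:ℝ)) := by
    intro i j
    have I1 := fbmAux_integrable α hα1 hα2 (t i)
    have I2 := fbmAux_integrable α hα1 hα2 (t j)
    have I3 := fbmAux_integrable α hα1 hα2 (t i - t j)
    have I12 : IntegrableOn (fun l : ℝ => (1 - Real.cos (t i * l)) * l ^ (-1 - α)
        + (1 - Real.cos (t j * l)) * l ^ (-1 - α)) (Ioi (0:ℝ)) := I1.add I2
    have I123 : IntegrableOn (fun l : ℝ => (1 - Real.cos (t i * l)) * l ^ (-1 - α)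
        + (1 - Real.cos (t j * l)) * l ^ (-1 - α)
        - (1 - Real.cos ((t i - t j) * l)) * l ^ (-1 - α)) (Ioi (0:ℝ)) := I12.sub I3
    exact (I123.const_mul (a i * a j)).congr
      (ae_of_all _ fun l => by simp only [hhdef]; ring)
  have key : ∀ i j, ∫ l in Ioi (0:ℝ), h i j l
      = (2 * c) * (a i * a j *
        ((1 / 2) * ((t i) ^ α + (t j) ^ α - |t i - t j| ^ α))) := by
    intro i j
    have I1 := fbmAux_integrable α hα1 hα2 (t i)
    have I2 := fbmAux_integrable α hα1 hα2 (t j)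
    have I3 := fbmAux_integrable α hα1 hα2 (t i - t j)
    have hsplit : ∀ l : ℝ, h i j l = a i * a j *
        (((1 - Real.cos (t i * l)) * l ^ (-1 - α) + (1 - Real.cos (t j * l)) * l ^ (-1 - α))
          - (1 - Real.cos ((t i - t j) * l)) * l ^ (-1 - α)) := fun l => by
      simp only [hhdef]; ring
    have I12 : IntegrableOn (fun l : ℝ => (1 - Real.cos (t i * l)) * l ^ (-1 - α)
        + (1 - Real.cos (t j * l)) * l ^ (-1 - α)) (Ioi (0:ℝ)) := I1.add I2
    rw [setIntegral_congr_fun measurableSet_Ioi (fun l _ => hsplit l), integral_const_mul,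
      integral_sub I12 I3, integral_add I1 I2]
    have e1 : ∫ l in Ioi (0:ℝ), (1 - Real.cos (t i * l)) * l ^ (-1 - α) = (t i) ^ α * c :=
      fbmJ_eq α hα1 (ht i)
    have e2 : ∫ l in Ioi (0:ℝ), (1 - Real.cos (t j * l)) * l ^ (-1 - α) = (t j) ^ α * c :=
      fbmJ_eq α hα1 (ht j)
    have e3 : ∫ l in Ioi (0:ℝ), (1 - Real.cos ((t i - t j) * l)) * l ^ (-1 - α)
        = |t i - t j| ^ α * c := by
      rw [show (∫ l in Ioi (0:ℝ), (1 - Real.cos ((t i - t j) * l)) * l ^ (-1 - α))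
        = fbmJ α (t i - t j) from rfl, ← fbmJ_abs α (t i - t j)]
      exact fbmJ_eq α hα1 (abs_nonneg _)
    rw [e1, e2, e3]
    ring
  -- rewrite the target sum as an integral of the double sum
  have hsum : ∑ i, ∑ j, a i * a j *
      ((1 / 2) * ((t i) ^ α + (t j) ^ α - |t i - t j| ^ α))
      = (1 / (2 * c)) * ∫ l in Ioi (0:ℝ), ∑ i, ∑ j, h i j l := by
    rw [integral_finset_sum _ (fun i _ => integrable_finset_sum _ (fun j _ => hInt i j))]
    simp only [integral_finset_sum _ (fun j (_ : j ∈ Finset.univ) => hInt _ j)]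
    simp only [key, ← Finset.mul_sum]
    field_simp
  rw [hsum]
  apply mul_nonneg (by positivity)
  apply setIntegral_nonneg measurableSet_Ioi
  intro l hl
  have hw : (0:ℝ) ≤ l ^ (-1 - α) := Real.rpow_nonneg (le_of_lt hl) _
  have hpt : ∑ i, ∑ j, h i j l
      = ((∑ i, a i * (1 - Real.cos (t i * l))) ^ 2
        + (∑ i, a i * Real.sin (t i * l)) ^ 2) * l ^ (-1 - α) := by
    simp only [hhdef, ← Finset.sum_mul]
    congr 1
    rw [sq, sq, Finset.sum_mul_sum, Finset.sum_mul_sum, ← Finset.sum_add_distrib]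
    apply Finset.sum_congr rfl
    intro i _
    rw [← Finset.sum_add_distrib]
    apply Finset.sum_congr rfl
    intro j _
    rw [show (t i - t j) * l = t i * l - t j * l by ring, Real.cos_sub]
    ring
  rw [hpt]
  positivity
end

section
/- Let H > 1/2, a, b ∈ ℝ, b ≠ 0. Define for 0 ≤ s ≤ t, U_Y(t,s) = exp{b(B^H_t - B^H_s) - (1/2)b²(t-s)^{2H} + a(t-s)} and X_t = exp{bB^H_t - (1/2)b²t^{2H} + at}. Then the mild-type identity X_t = U_Y(t,0) + ∫₀^t U_Y(t,r) a X_r dr FAILS in general: for a ≠ 0, b ≠ 0, H ≠ 1/2 there exist t > 0 with X_t ≠ U_Y(t,0)·1 + ∫₀^t U_Y(t,r)(aX_r) dr. -/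
open MeasureTheory Real

/-! Since `B 0 = 0`, `U_Y t 0 = X t`, so the identity would force
`∫₀^t U_Y t r · a X r dr = 0`. But the noise cancels in
`U_Y t r · X r = exp (b B t + a t - b²((t-r)^(2H) + r^(2H))/2)`, a positive integrand bounded
by `exp (b B t + a t)` on `[0, t]`, so the integral is `a` times a positive number. -/

theorem setIntegral_exp_pos_of_ae_le {α : Type*} [MeasurableSpace α] {μ : Measure α}
    {s : Set α} (hs₀ : μ s ≠ 0) (hs : μ s < ⊤) {f : α → ℝ} (hf : AEMeasurable f (μ.restrict s))
    {C : ℝ} (hfC : ∀ᵐ x ∂μ.restrict s, f x ≤ C) :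
    0 < ∫ x in s, exp (f x) ∂μ := by
  have : NeZero (μ.restrict s) := ⟨by simpa using hs₀⟩
  refine integral_exp_pos (IntegrableOn.of_bound hs hf.exp.aestronglyMeasurable (exp C) ?_)
  filter_upwards [hfC] with x hx
  simpa [abs_of_pos (exp_pos _)] using hx

theorem exp_mul_exp_eq_exp_rpow_add_rpow (a b p t r : ℝ) (B : ℝ → ℝ) :
    exp (b * (B t - B r) - (1 / 2) * b ^ 2 * (t - r) ^ p + a * (t - r))
      * exp (b * B r - (1 / 2) * b ^ 2 * r ^ p + a * r)
      = exp (b * B t + a * t - (1 / 2) * b ^ 2 * ((t - r) ^ p + r ^ p)) := by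
  rw [← exp_add]; ring_nf

theorem setIntegral_exp_sub_rpow_add_rpow_pos {t : ℝ} (ht : 0 < t) (c k p : ℝ) (hk : 0 ≤ k) :
    0 < ∫ r in Set.Ioc 0 t, exp (c - k * ((t - r) ^ p + r ^ p)) := by
  refine setIntegral_exp_pos_of_ae_le (by simp [ht]) measure_Ioc_lt_top
    (by fun_prop) (C := c) ?_
  refine (ae_restrict_mem measurableSet_Ioc).mono fun r ⟨hr₀, hrt⟩ => ?_
  have : 0 ≤ (t - r) ^ p + r ^ p :=
    add_nonneg (rpow_nonneg (sub_nonneg.mpr hrt) p) (rpow_nonneg hr₀.le p)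
  nlinarith

theorem mild_formula_fails_for_fbm_general
    (H : ℝ)
    (a b : ℝ) (ha : a ≠ 0)
    (B : ℝ → ℝ) (hB0 : B 0 = 0)
    (U_Y : ℝ → ℝ → ℝ)
    (hU : ∀ s t : ℝ, U_Y t s
      = Real.exp (b * (B t - B s) - (1 / 2) * b ^ 2 * (t - s) ^ (2 * H) + a * (t - s)))
    (X : ℝ → ℝ)
    (hX : ∀ t : ℝ, X t
      = Real.exp (b * B t - (1 / 2) * b ^ 2 * t ^ (2 * H) + a * t)) :
    ∃ t : ℝ, 0 < t ∧
      X t ≠ U_Y t 0 + ∫ r in Set.Ioc (0 : ℝ) t, U_Y t r * (a * X r) := by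
  refine ⟨1, one_pos, fun h => ?_⟩
  have hU0 : U_Y 1 0 = X 1 := by simp [hU, hX, hB0]
  have hint : ∫ r in Set.Ioc (0 : ℝ) 1, U_Y 1 r * (a * X r)
      = a * ∫ r in Set.Ioc (0 : ℝ) 1,
          exp (b * B 1 + a * 1 - (1 / 2) * b ^ 2 * ((1 - r) ^ (2 * H) + r ^ (2 * H))) := by
    rw [← integral_const_mul]
    congr 1 with r
    rw [hU, hX, ← exp_mul_exp_eq_exp_rpow_add_rpow]
    ring
  have hpos := setIntegral_exp_sub_rpow_add_rpow_pos one_pos (b * B 1 + a * 1) ((1 / 2) * b ^ 2)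
    (2 * H) (by positivity)
  rw [hU0, hint, left_eq_add] at h
  exact mul_ne_zero ha hpos.ne' h

/-- Counterexample: for the one-dimensional equation `dX = aX dt + bX dB^H` with
`X t = exp (b B t - b² t^(2H)/2 + a t)` and
`U_Y t s = exp (b (B t - B s) - b² (t-s)^(2H)/2 + a (t-s))`, the mild-type identity
`X t = U_Y t 0 + ∫₀^t U_Y t r · (a X r) dr` FAILS for some `t > 0`, whenever
`a ≠ 0`, `b ≠ 0` and `H ∈ (1/2,1)`. -/
theorem mild_formula_fails_for_fbm
    (H : ℝ) (hH : H ∈ Set.Ioo (1 / 2 : ℝ) 1)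
    (a b : ℝ) (ha : a ≠ 0) (hb : b ≠ 0)
    (B : ℝ → ℝ) (hBcont : Continuous B) (hB0 : B 0 = 0)
    (U_Y : ℝ → ℝ → ℝ)
    (hU : ∀ s t : ℝ, U_Y t s
      = Real.exp (b * (B t - B s) - (1 / 2) * b ^ 2 * (t - s) ^ (2 * H) + a * (t - s)))
    (X : ℝ → ℝ)
    (hX : ∀ t : ℝ, X t
      = Real.exp (b * B t - (1 / 2) * b ^ 2 * t ^ (2 * H) + a * t)) :
    ∃ t : ℝ, 0 < t ∧
      X t ≠ U_Y t 0 + ∫ r in Set.Ioc (0 : ℝ) t, U_Y t r * (a * X r) :=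
  mild_formula_fails_for_fbm_general H a b ha B hB0 U_Y hU X hX
end

section
/- Let V be a Hilbert space, S_A a strongly continuous semigroup on V with generator A, and X: [0,T] → V continuous with ⟨X_t, ξ⟩ = ∫₀^t ⟨X_r, A*ξ⟩ dr for all ξ ∈ Dom(A*) and t ∈ [0,T] (with X_0 = 0). Then X ≡ 0 on [0,T]. -/
/-!
For `η ∈ V` and `a ≥ 0` the vector `ξ = (∫₀^a S τ dτ)† η` lies in `Dom(A*)` with
`A* ξ = (S a - 1)† η`, because `∫₀^a S τ (A x) dτ = S a x - x` on `Dom(A)`. Testing the weak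
equation against these `ξ` shows that `Z t = ∫₀^t X` satisfies
`∫₀^a S τ (X t) dτ = (S a - 1) (Z t)`: `Z` is a strong solution with `Z' = X`. The product rule
then makes `s ↦ S (t - s) (Z s)` constant on `[0, t]`, so `Z t = S t (Z 0) = 0`. Finally `X t`
is the right derivative at `0` of `a ↦ ∫₀^a S τ (X t) dτ = (S a - 1) (Z t) = 0`.
-/

open MeasureTheory Set Filter Topology intervalIntegral
open scoped InnerProductSpace

section OperatorFamily

variable {ι E F : Type*} [TopologicalSpace ι] [NormedAddCommGroup E] [NormedSpace ℝ E]
  [NormedAddCommGroup F] [NormedSpace ℝ F]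

theorem IsCompact.exists_bound_of_continuousOn_apply [CompleteSpace E] {S : ι → E →L[ℝ] F}
    {K : Set ι} (hK : IsCompact K) (hS : ∀ v, ContinuousOn (fun t => S t v) K) :
    ∃ M, ∀ t ∈ K, ‖S t‖ ≤ M := by
  obtain ⟨M, hM⟩ := banach_steinhaus (g := fun t : K => S t) fun v => by
    obtain ⟨C, hC⟩ := hK.exists_bound_of_continuousOn (hS v)
    exact ⟨C, fun t => hC t t.2⟩
  exact ⟨M, fun t ht => hM ⟨t, ht⟩⟩

theorem continuousWithinAt_uncurry_apply_of_bound {S : ι → E →L[ℝ] F} {s : Set ι} {x : ι}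
    {v : E} {M : ℝ} (hS : ContinuousWithinAt (fun t => S t v) s x)
    (hM : ∀ᶠ t in 𝓝[s] x, ‖S t‖ ≤ M) :
    ContinuousWithinAt (fun p : ι × E => S p.1 p.2) (s ×ˢ univ) (x, v) := by
  rw [ContinuousWithinAt, nhdsWithin_prod_eq, nhdsWithin_univ, tendsto_iff_norm_sub_tendsto_zero]
  have hlim : Tendsto (fun p : ι × E => M * ‖p.2 - v‖ + ‖S p.1 v - S x v‖)
      (𝓝[s] x ×ˢ 𝓝 v) (𝓝 0) := by
    have h₁ := ((tendsto_iff_norm_sub_tendsto_zero.1 tendsto_id).const_mul M).comp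
      (tendsto_snd (f := 𝓝[s] x) (g := 𝓝 v))
    have h₂ := (tendsto_iff_norm_sub_tendsto_zero.1 hS).comp
      (tendsto_fst (f := 𝓝[s] x) (g := 𝓝 v))
    simpa using h₁.add h₂
  refine squeeze_zero' (Eventually.of_forall fun _ => norm_nonneg _) ?_ hlim
  filter_upwards [hM.prod_inl (𝓝 v)] with p hp
  calc ‖S p.1 p.2 - S x v‖ = ‖S p.1 (p.2 - v) + (S p.1 v - S x v)‖ := by
        rw [map_sub]; abel_nf
    _ ≤ ‖S p.1 (p.2 - v)‖ + ‖S p.1 v - S x v‖ := norm_add_le _ _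
    _ ≤ M * ‖p.2 - v‖ + ‖S p.1 v - S x v‖ := by
        gcongr; exact (S p.1).le_of_opNorm_le hp _

theorem IsClosed.continuousOn_uncurry_apply [CompleteSpace E] [WeaklyLocallyCompactSpace ι]
    {S : ι → E →L[ℝ] F} {s : Set ι} (hs : IsClosed s)
    (hS : ∀ v, ContinuousOn (fun t => S t v) s) :
    ContinuousOn (fun p : ι × E => S p.1 p.2) (s ×ˢ univ) := by
  rintro ⟨x, v⟩ ⟨hx, -⟩
  obtain ⟨K, hK, hKx⟩ := exists_compact_mem_nhds x
  obtain ⟨M, hM⟩ := (hK.inter_right hs).exists_bound_of_continuousOn_apply fun v =>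
    (hS v).mono inter_subset_right
  refine continuousWithinAt_uncurry_apply_of_bound (M := M) (hS v x hx) ?_
  filter_upwards [mem_nhdsWithin_of_mem_nhds hKx, self_mem_nhdsWithin] with t htK hts
  exact hM t ⟨htK, hts⟩

theorem ContinuousWithinAt.hasDerivWithinAt_clm_apply {φ : ℝ → E →L[ℝ] F} {u : ℝ → E}
    {u' : E} {g : F} {s : Set ℝ} {x : ℝ}
    (hφ : ContinuousWithinAt (fun p : ℝ × E => φ p.1 p.2) (s ×ˢ univ) (x, u'))
    (hφu : HasDerivWithinAt (fun y => φ y (u x)) g s x) (hu : HasDerivWithinAt u u' s x) :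
    HasDerivWithinAt (fun y => φ y (u y)) (g + φ x u') s x := by
  rw [hasDerivWithinAt_iff_tendsto_slope] at hφu hu ⊢
  have hpair : Tendsto (fun y => (y, slope u x y)) (𝓝[s \ {x}] x) (𝓝[s ×ˢ univ] (x, u')) :=
    tendsto_nhdsWithin_iff.2 ⟨(tendsto_nhdsWithin_of_tendsto_nhds tendsto_id).prodMk_nhds hu,
      eventually_nhdsWithin_of_forall fun y hy => ⟨hy.1, mem_univ _⟩⟩
  refine (hφu.add (hφ.tendsto.comp hpair)).congr fun y => ?_
  simp only [slope_def_module, Function.comp_apply, map_smul, ← smul_add, map_sub]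
  abel_nf

theorem ContinuousOn.hasDerivWithinAt_integral_Icc [CompleteSpace E] {f : ℝ → E} {a b x : ℝ}
    (hf : ContinuousOn f (Icc a b)) (hx : x ∈ Icc a b) :
    HasDerivWithinAt (fun u => ∫ y in a..u, f y) (f x) (Icc a b) x := by
  have : Fact (x ∈ Icc a b) := ⟨hx⟩
  exact integral_hasDerivWithinAt_right
    (hf.mono (uIcc_subset_Icc (left_mem_Icc.2 (hx.1.trans hx.2)) hx)).intervalIntegrable
    (hf.stronglyMeasurableAtFilter_nhdsWithin measurableSet_Icc x) (hf x hx)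

variable [CompleteSpace E]

noncomputable def strongIntervalIntegral (S : ℝ → E →L[ℝ] F) {a b : ℝ}
    (hS : ∀ v, ContinuousOn (fun t => S t v) (uIcc a b)) : E →L[ℝ] F :=
  LinearMap.mkContinuousOfExistsBound
    { toFun := fun v => ∫ t in a..b, S t v
      map_add' := fun v w => by
        simp only [map_add]
        exact integral_add (hS v).intervalIntegrable (hS w).intervalIntegrable
      map_smul' := fun c v => by
        simp only [map_smul]
        exact integral_smul c _ }
    (by
      obtain ⟨M, hM⟩ := isCompact_uIcc.exists_bound_of_continuousOn_apply hS
      refine ⟨M * |b - a|, fun v => ?_⟩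
      calc ‖∫ t in a..b, S t v‖ ≤ M * ‖v‖ * |b - a| :=
            norm_integral_le_of_norm_le_const fun t ht =>
              (S t).le_of_opNorm_le (hM t (uIoc_subset_uIcc ht)) v
        _ = M * |b - a| * ‖v‖ := by ring)

end OperatorFamily

section Semigroup

variable {E : Type*} [NormedAddCommGroup E] [NormedSpace ℝ E]

structure IsC0Semigroup (S : ℝ → E →L[ℝ] E) : Prop where
  map_zero : S 0 = ContinuousLinearMap.id ℝ E
  map_add : ∀ s t : ℝ, 0 ≤ s → 0 ≤ t → S (s + t) = (S s).comp (S t)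
  continuousOn_apply : ∀ v : E, ContinuousOn (fun t => S t v) (Ici 0)

variable {S : ℝ → E →L[ℝ] E}

theorem IsC0Semigroup.map_zero_apply (hS : IsC0Semigroup S) (v : E) : S 0 v = v := by
  rw [hS.map_zero]; rfl

theorem IsC0Semigroup.hasDerivWithinAt_apply (hS : IsC0Semigroup S) {v w : E}
    (hv : HasDerivWithinAt (fun t => S t v) w (Ici 0) 0) {τ : ℝ} (hτ : 0 ≤ τ) :
    HasDerivWithinAt (fun t => S t v) (S τ w) (Ici τ) τ := by
  have hshift : HasDerivWithinAt (fun h => S (τ + h) v) (S τ w) (Ici 0) 0 := by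
    refine ((S τ).hasFDerivAt.comp_hasDerivWithinAt 0 hv).congr (fun h hh => ?_) ?_
    · rw [hS.map_add τ h hτ hh]; rfl
    · simp [hS.map_zero_apply]
  rw [hasDerivWithinAt_iff_hasFDerivWithinAt,
    hasFDerivWithinAt_comp_add_left (f := fun t => S t v)] at hshift
  simpa [hasDerivWithinAt_iff_hasFDerivWithinAt, ← image_vadd] using hshift

theorem IsC0Semigroup.integral_apply_eq_sub [CompleteSpace E] (hS : IsC0Semigroup S) {v w : E}
    (hv : HasDerivWithinAt (fun t => S t v) w (Ici 0) 0) {a : ℝ} (ha : 0 ≤ a) :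
    ∫ τ in 0..a, S τ w = S a v - v := by
  have hw : IntervalIntegrable (fun τ => S τ w) volume 0 a :=
    ((hS.continuousOn_apply w).mono
      (by rw [uIcc_of_le ha]; exact Icc_subset_Ici_self)).intervalIntegrable
  simpa only [hS.map_zero_apply] using integral_eq_sub_of_hasDeriv_right_of_le ha
    ((hS.continuousOn_apply v).mono Icc_subset_Ici_self)
    (fun τ hτ => (hS.hasDerivWithinAt_apply hv hτ.1.le).mono Ioi_subset_Ici_self) hw

theorem IsC0Semigroup.eq_zero_of_integral_apply_eq_zero [CompleteSpace E] (hS : IsC0Semigroup S)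
    {v : E} (hv : ∀ a, 0 ≤ a → ∫ τ in 0..a, S τ v = 0) : v = 0 := by
  have hderiv : HasDerivWithinAt (fun a => ∫ τ in 0..a, S τ v) v (Icc 0 1) 0 := by
    simpa only [hS.map_zero_apply] using ((hS.continuousOn_apply v).mono Icc_subset_Ici_self
      ).hasDerivWithinAt_integral_Icc (left_mem_Icc.2 zero_le_one)
  have hzero : HasDerivWithinAt (fun a => ∫ τ in 0..a, S τ v) 0 (Icc 0 1) 0 :=
    (hasDerivWithinAt_const _ _ 0).congr (fun a ha => hv a ha.1) (hv 0 le_rfl)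
  exact (uniqueDiffOn_Icc zero_lt_one 0 (left_mem_Icc.2 zero_le_one)).eq_deriv _ hderiv hzero

end Semigroup

section Hilbert

variable {V : Type*} [NormedAddCommGroup V] [InnerProductSpace ℝ V] [CompleteSpace V]
  {S : ℝ → V →L[ℝ] V} {A : V →ₗ.[ℝ] V}

theorem IsC0Semigroup.exists_mem_adjoint_domain (hS : IsC0Semigroup S)
    (hA : Dense (A.domain : Set V))
    (hgen : ∀ v : A.domain, HasDerivWithinAt (fun t => S t v) (A v) (Ici 0) 0)
    {a : ℝ} (ha : 0 ≤ a) (η : V) :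
    ∃ ξ : A.adjoint.domain, (∀ v, ⟪(ξ : V), v⟫_ℝ = ⟪η, ∫ τ in 0..a, S τ v⟫_ℝ) ∧
      A.adjoint ξ = ContinuousLinearMap.adjoint (S a - 1) η := by
  have hSa : ∀ v, ContinuousOn (fun t => S t v) (uIcc 0 a) := fun v =>
    (hS.continuousOn_apply v).mono (by rw [uIcc_of_le ha]; exact Icc_subset_Ici_self)
  set ξ := ContinuousLinearMap.adjoint (strongIntervalIntegral S hSa) η
  have hξ : ∀ v, ⟪ξ, v⟫_ℝ = ⟪η, ∫ τ in 0..a, S τ v⟫_ℝ := fun v =>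
    ContinuousLinearMap.adjoint_inner_left _ v η
  have hAξ : ∀ x : A.domain, ⟪ContinuousLinearMap.adjoint (S a - 1) η, (x : V)⟫_ℝ = ⟪ξ, A x⟫_ℝ :=
    fun x => by
      rw [ContinuousLinearMap.adjoint_inner_left, hξ, hS.integral_apply_eq_sub (hgen x) ha]
      rfl
  have hmem : ξ ∈ A.adjoint.domain := LinearPMap.mem_adjoint_domain_of_exists _ ⟨_, hAξ⟩
  exact ⟨⟨ξ, hmem⟩, hξ, LinearPMap.adjoint_apply_eq hA _ hAξ⟩

def IsWeakSolution (A : V →ₗ.[ℝ] V) (T : ℝ) (X : ℝ → V) : Prop :=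
  ∀ ξ : A.adjoint.domain, ∀ t ∈ Icc (0 : ℝ) T,
    ⟪X t, (ξ : V)⟫_ℝ = ∫ r in Ioc (0 : ℝ) t, ⟪X r, A.adjoint ξ⟫_ℝ

variable {T : ℝ} {X : ℝ → V}

theorem IsWeakSolution.integral_semigroup_apply_eq (hX : IsWeakSolution A T X)
    (hXc : ContinuousOn X (Icc 0 T)) (hS : IsC0Semigroup S) (hA : Dense (A.domain : Set V))
    (hgen : ∀ v : A.domain, HasDerivWithinAt (fun t => S t v) (A v) (Ici 0) 0)
    {t : ℝ} (ht : t ∈ Icc 0 T) {a : ℝ} (ha : 0 ≤ a) :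
    ∫ τ in 0..a, S τ (X t) = (S a - 1) (∫ r in 0..t, X r) := by
  refine ext_inner_left ℝ fun η => ?_
  obtain ⟨ξ, hξ, hAξ⟩ := hS.exists_mem_adjoint_domain hA hgen ha η
  have hint : IntegrableOn X (Ioc 0 t) :=
    (hXc.mono (Icc_subset_Icc_right ht.2)).integrableOn_Icc.mono_set Ioc_subset_Icc_self
  calc ⟪η, ∫ τ in 0..a, S τ (X t)⟫_ℝ = ⟪X t, (ξ : V)⟫_ℝ := by rw [← hξ, real_inner_comm]
    _ = ∫ r in Ioc 0 t, ⟪η, (S a - 1) (X r)⟫_ℝ := by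
        simp_rw [hX ξ t ht, hAξ, ContinuousLinearMap.adjoint_inner_right, real_inner_comm η]
    _ = ⟪η, (S a - 1) (∫ r in 0..t, X r)⟫_ℝ := by
        rw [integral_inner ((S a - 1).integrable_comp hint), integral_of_le ht.1,
          (S a - 1).integral_comp_comm hint]

theorem IsWeakSolution.hasDerivWithinAt_semigroup_apply_integral (hX : IsWeakSolution A T X)
    (hXc : ContinuousOn X (Icc 0 T)) (hS : IsC0Semigroup S) (hA : Dense (A.domain : Set V))
    (hgen : ∀ v : A.domain, HasDerivWithinAt (fun t => S t v) (A v) (Ici 0) 0)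
    {t : ℝ} (ht : t ≤ T) {s : ℝ} (hs : s ∈ Ico 0 t) :
    HasDerivWithinAt (fun r => S (t - r) (∫ q in 0..r, X q)) 0 (Ici s) s := by
  have hsT : s ∈ Icc 0 T := ⟨hs.1, hs.2.le.trans ht⟩
  have hts : 0 < t - s := sub_pos.2 hs.2
  have hφ : ContinuousWithinAt (fun p : ℝ × V => S (t - p.1) p.2) (Ici s ×ˢ univ) (s, X s) := by
    have hc := (isClosed_Ici.continuousOn_uncurry_apply hS.continuousOn_apply).continuousAt
      (prod_mem_nhds (Ici_mem_nhds hts) (univ_mem (f := 𝓝 (X s))))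
    exact (hc.comp (x := (s, X s)) (f := fun p : ℝ × V => (t - p.1, p.2))
      (by fun_prop)).continuousWithinAt
  have horbit : HasDerivAt (fun r => ∫ τ in 0..r, S τ (X s)) (S (t - s) (X s)) (t - s) :=
    (((hS.continuousOn_apply (X s)).mono Icc_subset_Ici_self).hasDerivWithinAt_integral_Icc
      (b := t - s + 1) ⟨hts.le, by linarith⟩).hasDerivAt (Icc_mem_nhds hts (by linarith))
  have hφu : HasDerivWithinAt (fun r => S (t - r) (∫ q in 0..s, X q)) (-S (t - s) (X s))
      (Ici s) s := by
    refine (((horbit.comp_const_sub t s).const_add (∫ q in 0..s, X q)).congr_of_eventuallyEq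
      ?_).hasDerivWithinAt
    filter_upwards [eventually_lt_nhds hs.2] with r hr
    rw [hX.integral_semigroup_apply_eq hXc hS hA hgen hsT (sub_nonneg.2 hr.le)]
    simp
  have hu : HasDerivWithinAt (fun r => ∫ q in 0..r, X q) (X s) (Ici s) s :=
    (hXc.hasDerivWithinAt_integral_Icc hsT).mono_of_mem_nhdsWithin
      (Icc_mem_nhdsGE_of_mem ⟨hs.1, hs.2.trans_le ht⟩)
  simpa using hφ.hasDerivWithinAt_clm_apply hφu hu

theorem IsWeakSolution.integral_eq_zero (hX : IsWeakSolution A T X)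
    (hXc : ContinuousOn X (Icc 0 T)) (hS : IsC0Semigroup S) (hA : Dense (A.domain : Set V))
    (hgen : ∀ v : A.domain, HasDerivWithinAt (fun t => S t v) (A v) (Ici 0) 0)
    {t : ℝ} (ht : t ∈ Icc 0 T) : ∫ r in 0..t, X r = 0 := by
  have hZc : ContinuousOn (fun r => ∫ q in 0..r, X q) (Icc 0 t) := fun r hr =>
    ((hXc.hasDerivWithinAt_integral_Icc ⟨hr.1, hr.2.trans ht.2⟩).continuousWithinAt).mono
      (Icc_subset_Icc_right ht.2)
  have hWc : ContinuousOn (fun r => S (t - r) (∫ q in 0..r, X q)) (Icc 0 t) :=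
    (isClosed_Ici.continuousOn_uncurry_apply hS.continuousOn_apply).comp
      ((continuousOn_const.sub continuousOn_id).prodMk hZc)
      fun r hr => ⟨sub_nonneg.2 hr.2, mem_univ _⟩
  have hconst := constant_of_has_deriv_right_zero hWc
    (fun s hs => hX.hasDerivWithinAt_semigroup_apply_integral hXc hS hA hgen ht.2 hs) t
    (right_mem_Icc.2 ht.1)
  simpa [hS.map_zero_apply] using hconst

end Hilbert

theorem weak_solution_homogeneous_vanishes_general
    {V : Type*} [NormedAddCommGroup V] [InnerProductSpace ℝ V] [CompleteSpace V]
    (T : ℝ)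
    (A : V →ₗ.[ℝ] V) (hdense : Dense (A.domain : Set V))
    (S_A : ℝ → V →L[ℝ] V)
    (hS0 : S_A 0 = ContinuousLinearMap.id ℝ V)
    (hSadd : ∀ s t : ℝ, 0 ≤ s → 0 ≤ t → S_A (s + t) = (S_A s).comp (S_A t))
    (hScont : ∀ v : V, ContinuousOn (fun t => S_A t v) (Set.Ici 0))
    (hgen : ∀ v : A.domain, HasDerivAt (fun t : ℝ => S_A t (v : V)) (A v) 0)
    (X : ℝ → V)
    (hXcont : ContinuousOn X (Set.Icc 0 T))
    (hweak : ∀ (ξ : A.adjoint.domain), ∀ t ∈ Set.Icc (0 : ℝ) T,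
      ⟪X t, (ξ : V)⟫_ℝ = ∫ r in Set.Ioc (0 : ℝ) t, ⟪X r, A.adjoint ξ⟫_ℝ) :
    ∀ t ∈ Set.Icc (0 : ℝ) T, X t = 0 := by
  have hS : IsC0Semigroup S_A := ⟨hS0, hSadd, hScont⟩
  have hgen_right : ∀ v : A.domain, HasDerivWithinAt (fun t => S_A t v) (A v) (Ici 0) 0 :=
    fun v => (hgen v).hasDerivWithinAt
  have hX : IsWeakSolution A T X := hweak
  intro t ht
  refine hS.eq_zero_of_integral_apply_eq_zero fun a ha => ?_
  rw [hX.integral_semigroup_apply_eq hXcont hS hdense hgen_right ht ha,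
    hX.integral_eq_zero hXcont hS hdense hgen_right ht, map_zero]

/-- Deterministic weak uniqueness: if `A` is the generator of a strongly continuous
semigroup `S_A` on a Hilbert space `V`, `X : [0,T] → V` is continuous with `X 0 = 0` and
`⟨X t, ξ⟩ = ∫₀^t ⟨X r, A* ξ⟩ dr` for all `ξ ∈ Dom(A*)` and `t ∈ [0,T]`, then `X ≡ 0`
on `[0,T]`. -/
theorem weak_solution_homogeneous_vanishes
    {V : Type*} [NormedAddCommGroup V] [InnerProductSpace ℝ V] [CompleteSpace V]
    (T : ℝ) (hT : 0 < T)
    (A : V →ₗ.[ℝ] V) (hdense : Dense (A.domain : Set V))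
    (S_A : ℝ → V →L[ℝ] V)
    (hS0 : S_A 0 = ContinuousLinearMap.id ℝ V)
    (hSadd : ∀ s t : ℝ, 0 ≤ s → 0 ≤ t → S_A (s + t) = (S_A s).comp (S_A t))
    (hScont : ∀ v : V, ContinuousOn (fun t => S_A t v) (Set.Ici 0))
    (hgen : ∀ v : A.domain, HasDerivAt (fun t : ℝ => S_A t (v : V)) (A v) 0)
    (X : ℝ → V)
    (hXcont : ContinuousOn X (Set.Icc 0 T)) (hX0 : X 0 = 0)
    (hweak : ∀ (ξ : A.adjoint.domain), ∀ t ∈ Set.Icc (0 : ℝ) T,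
      ⟪X t, (ξ : V)⟫_ℝ = ∫ r in Set.Ioc (0 : ℝ) t, ⟪X r, A.adjoint ξ⟫_ℝ) :
    ∀ t ∈ Set.Icc (0 : ℝ) T, X t = 0 :=
  weak_solution_homogeneous_vanishes_general T A hdense S_A hS0 hSadd hScont hgen X hXcont hweak
end
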